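/- In the extended Black–Scholes model with an earnings announcement and zero interest rate (r = 0), for an at-the-money option (S = K) the time decay of the pre-announcement call price is strictly less severe than the ordinary Black–Scholes Theta: if σ_e > 0 and 0 ≤ t < T, then ∂C/∂t (t, S) > Θ_BS(T−t, S; σ, S, 0), where C(t,S) = C_BS(T−t, S; I(t), S, 0) with I(t) = √(σ² + σ_e²/(T−t)) and Θ_BS(τ, S; σ, K, 0) = −S·σ·φ(d₁)/(2√τ). -/

import Mathlib

open MeasureTheory ProbabilityTheory

/-- The standard normal cumulative distribution function `Φ`. -/
noncomputable def stdNormalCDF (x : ℝ) : ℝ := ((gaussianReal 0 1) (Set.Iic x)).toReal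

/-- The standard normal density `φ`. -/
noncomputable def stdNormalPDF (x : ℝ) : ℝ := Real.exp (-x ^ 2 / 2) / Real.sqrt (2 * Real.pi)

/-- The Black–Scholes quantity `d₁`. -/
noncomputable def d1 (τ S σ K r : ℝ) : ℝ :=
  (Real.log (S / K) + (r + σ ^ 2 / 2) * τ) / (σ * Real.sqrt τ)

/-- The Black–Scholes quantity `d₂ = d₁ − σ√τ`. -/
noncomputable def d2 (τ S σ K r : ℝ) : ℝ := d1 τ S σ K r - σ * Real.sqrt τ

/-- The Black–Scholes call price `C_BS(τ, S; σ, K, r) = S·Φ(d₁) − K·e^{−rτ}·Φ(d₂)`. -/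
noncomputable def BSCall (τ S σ K r : ℝ) : ℝ :=
  S * stdNormalCDF (d1 τ S σ K r) - K * Real.exp (-r * τ) * stdNormalCDF (d2 τ S σ K r)

/-- The Black–Scholes Vega `V_BS(τ, S; σ, K, r) = S·φ(d₁)·√τ`. -/
noncomputable def BSVega (τ S σ K r : ℝ) : ℝ :=
  S * stdNormalPDF (d1 τ S σ K r) * Real.sqrt τ

/-- The Black–Scholes Theta
`Θ_BS(τ, S; σ, K, r) = −S·σ·φ(d₁)/(2√τ) − r·K·e^{−rτ}·Φ(d₂)`. -/
noncomputable def BSTheta (τ S σ K r : ℝ) : ℝ :=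
  -S * σ * stdNormalPDF (d1 τ S σ K r) / (2 * Real.sqrt τ)
    - r * K * Real.exp (-r * τ) * stdNormalCDF (d2 τ S σ K r)

/-! At the money with zero rate the call price depends on `σ` and `τ` only through the
total standard deviation `w = σ√τ`, as `S (Φ(w/2) − Φ(−w/2))`, and the Theta is
`−(Sσ²/2)·φ(w/2)/w`. In the extended model the total standard deviation is
`w(t) = √(σ²(T−t) + σ_e²)`, whose `t`-derivative is `−σ²/(2w)`; by the chain rule
`∂C/∂t = −(Sσ²/2)·φ(w(t)/2)/w(t)`. So the claim compares `φ(x/2)/x` at `x = σ√(T−t)` and at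
the larger `x = w(t)`, and this function is strictly decreasing on `(0, ∞)`. -/

open Real

lemma gaussianPDFReal_zero_one : gaussianPDFReal 0 1 = stdNormalPDF := by
  ext x
  simp [gaussianPDFReal, stdNormalPDF, div_eq_inv_mul]

lemma stdNormalPDF_pos (x : ℝ) : 0 < stdNormalPDF x :=
  div_pos (exp_pos _) (sqrt_pos.2 (by positivity))

lemma stdNormalPDF_neg (x : ℝ) : stdNormalPDF (-x) = stdNormalPDF x := by
  simp [stdNormalPDF]

lemma stdNormalPDF_lt_of_sq_lt {x y : ℝ} (h : x ^ 2 < y ^ 2) : stdNormalPDF y < stdNormalPDF x :=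
  div_lt_div_of_pos_right (exp_lt_exp.2 (by linarith)) (sqrt_pos.2 (by positivity))

lemma continuous_stdNormalPDF : Continuous stdNormalPDF := by
  unfold stdNormalPDF; fun_prop

lemma integrable_stdNormalPDF : Integrable stdNormalPDF := by
  rw [← gaussianPDFReal_zero_one]; exact integrable_gaussianPDFReal 0 1

lemma stdNormalCDF_eq_integral (x : ℝ) : stdNormalCDF x = ∫ y in Set.Iic x, stdNormalPDF y := by
  rw [stdNormalCDF, gaussianReal_apply_eq_integral 0 one_ne_zero, ENNReal.toReal_ofReal,
    gaussianPDFReal_zero_one]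
  exact integral_nonneg (gaussianPDFReal_nonneg 0 1)

lemma hasDerivAt_stdNormalCDF (x : ℝ) : HasDerivAt stdNormalCDF (stdNormalPDF x) x := by
  have hcdf : (fun y => stdNormalCDF 0 + ∫ s in (0 : ℝ)..y, stdNormalPDF s) = stdNormalCDF := by
    ext y
    rw [stdNormalCDF_eq_integral, stdNormalCDF_eq_integral,
      ← intervalIntegral.integral_Iic_sub_Iic integrable_stdNormalPDF.integrableOn
        integrable_stdNormalPDF.integrableOn]
    ring
  rw [← hcdf]
  exact (intervalIntegral.integral_hasDerivAt_right integrable_stdNormalPDF.intervalIntegrable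
    continuous_stdNormalPDF.stronglyMeasurable.stronglyMeasurableAtFilter
    continuous_stdNormalPDF.continuousAt).const_add _

lemma d1_atm_zero_rate (τ S v : ℝ) : d1 τ S v S 0 = v * √τ / 2 := by
  have hlog : log (S / S) = 0 := by
    by_cases hS : S = 0 <;> simp [hS]
  rcases lt_or_ge τ 0 with hτ | hτ
  · simp [d1, sqrt_eq_zero_of_nonpos hτ.le]
  have hvτ : v ^ 2 / 2 * τ = (v * √τ) ^ 2 / 2 := by rw [mul_pow, sq_sqrt hτ]; ring
  rw [d1, hlog, zero_add, zero_add, hvτ]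
  rcases eq_or_ne (v * √τ) 0 with h | h
  · simp [h]
  · field_simp

noncomputable def atmCall (S w : ℝ) : ℝ :=
  S * stdNormalCDF (w / 2) - S * stdNormalCDF (-(w / 2))

lemma BSCall_atm_zero_rate (τ S v : ℝ) : BSCall τ S v S 0 = atmCall S (v * √τ) := by
  rw [BSCall, d2, d1_atm_zero_rate, atmCall, neg_zero, zero_mul, exp_zero, mul_one,
    show v * √τ / 2 - v * √τ = -(v * √τ / 2) by ring]

lemma hasDerivAt_atmCall (S w : ℝ) : HasDerivAt (atmCall S) (S * stdNormalPDF (w / 2)) w := by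
  have h := (hasDerivAt_stdNormalCDF (w / 2)).comp w ((hasDerivAt_id w).div_const 2)
  have h' := (hasDerivAt_stdNormalCDF (-(w / 2))).comp w ((hasDerivAt_id w).div_const 2).neg
  refine ((h.const_mul S).sub (h'.const_mul S)).congr_deriv ?_
  rw [stdNormalPDF_neg]; ring

lemma BSTheta_atm_zero_rate (τ S v : ℝ) :
    BSTheta τ S v S 0 = -(S * v ^ 2 / 2) * (stdNormalPDF (v * √τ / 2) / (v * √τ)) := by
  rw [BSTheta, d1_atm_zero_rate]
  rcases eq_or_ne (√τ) 0 with h | h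
  · simp [h]
  · field_simp
    ring

lemma strictAntiOn_stdNormalPDF_half_div :
    StrictAntiOn (fun x => stdNormalPDF (x / 2) / x) (Set.Ioi 0) := by
  intro a (ha : 0 < a) b (hb : 0 < b) hab
  have hpdf : stdNormalPDF (b / 2) < stdNormalPDF (a / 2) :=
    stdNormalPDF_lt_of_sq_lt (by nlinarith)
  calc stdNormalPDF (b / 2) / b < stdNormalPDF (a / 2) / b := by gcongr
    _ < stdNormalPDF (a / 2) / a := div_lt_div_of_pos_left (stdNormalPDF_pos _) ha hab

lemma sqrt_add_div_mul_sqrt {τ : ℝ} (hτ : 0 < τ) (σ σe : ℝ) :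
    √(σ ^ 2 + σe ^ 2 / τ) * √τ = √(σ ^ 2 * τ + σe ^ 2) := by
  rw [← sqrt_mul (by positivity)]
  congr 1
  field_simp

lemma hasDerivAt_totalStdDev {σ σe t T : ℝ} (hσ : σ ≠ 0) (htT : t < T) :
    HasDerivAt (fun s => √(σ ^ 2 * (T - s) + σe ^ 2))
      (-σ ^ 2 / (2 * √(σ ^ 2 * (T - t) + σe ^ 2))) t := by
  have hpos : 0 < σ ^ 2 * (T - t) + σe ^ 2 := by
    have := sub_pos.2 htT
    positivity
  have hlin : HasDerivAt (fun s => σ ^ 2 * (T - s) + σe ^ 2) (-σ ^ 2) t := by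
    simpa using (((hasDerivAt_id t).const_sub T).const_mul (σ ^ 2)).add_const (σe ^ 2)
  refine ((hasDerivAt_sqrt hpos.ne').comp t hlin).congr_deriv ?_
  field_simp

lemma hasDerivAt_extendedBSCall_atm_zero_rate (S : ℝ) {σ σe t T : ℝ} (hσ : σ ≠ 0)
    (htT : t < T) :
    HasDerivAt (fun s => BSCall (T - s) S (√(σ ^ 2 + σe ^ 2 / (T - s))) S 0)
      (-(S * σ ^ 2 / 2) * (stdNormalPDF (√(σ ^ 2 * (T - t) + σe ^ 2) / 2)
        / √(σ ^ 2 * (T - t) + σe ^ 2))) t := by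
  have hcall : (fun s => atmCall S √(σ ^ 2 * (T - s) + σe ^ 2))
      =ᶠ[nhds t] fun s => BSCall (T - s) S (√(σ ^ 2 + σe ^ 2 / (T - s))) S 0 := by
    filter_upwards [Iio_mem_nhds htT] with s hs
    rw [BSCall_atm_zero_rate, sqrt_add_div_mul_sqrt (sub_pos.2 hs)]
  refine (((hasDerivAt_atmCall S _).comp t
    (hasDerivAt_totalStdDev hσ htT)).congr_of_eventuallyEq hcall.symm).congr_deriv ?_
  ring

theorem extendedBS_theta_ATM_strict_general
    (σ σe t T S : ℝ) (hσ : 0 < σ) (hσe : 0 < σe) (hS : 0 < S)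
    (htT : t < T) :
    BSTheta (T - t) S σ S 0
      < deriv (fun s : ℝ => BSCall (T - s) S (Real.sqrt (σ ^ 2 + σe ^ 2 / (T - s))) S 0) t := by
  have hτ : 0 < T - t := sub_pos.2 htT
  rw [BSTheta_atm_zero_rate,
    (hasDerivAt_extendedBSCall_atm_zero_rate S hσ.ne' htT).deriv]
  have hstd : σ * √(T - t) < √(σ ^ 2 * (T - t) + σe ^ 2) := by
    calc σ * √(T - t) = √(σ ^ 2 * (T - t)) := by rw [sqrt_mul (sq_nonneg σ), sqrt_sq hσ.le]
      _ < √(σ ^ 2 * (T - t) + σe ^ 2) :=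
        sqrt_lt_sqrt (by positivity) (by linarith [pow_pos hσe 2])
  have hdecay := strictAntiOn_stdNormalPDF_half_div (by positivity : (0 : ℝ) < σ * √(T - t))
    (lt_trans (by positivity) hstd : (0 : ℝ) < √(σ ^ 2 * (T - t) + σe ^ 2)) hstd
  exact mul_lt_mul_of_neg_left hdecay (by nlinarith [pow_pos hσ 2])

/-- In the extended Black–Scholes model with an EA jump, zero interest rate
`r = 0` and at-the-money strike `K = S`, if `σ_e > 0` and `0 ≤ t < T` then the time decay of
the pre-announcement call price `C(t,S) = C_BS(T−t, S; I(t), S, 0)`, with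
`I(t) = √(σ² + σ_e²/(T−t))`, is strictly less severe than the ordinary Black–Scholes Theta:
`∂C/∂t (t, S) > Θ_BS(T−t, S; σ, S, 0)`. -/
theorem extendedBS_theta_ATM_strict
    (σ σe t T S : ℝ) (hσ : 0 < σ) (hσe : 0 < σe) (hS : 0 < S)
    (ht : 0 ≤ t) (htT : t < T) :
    BSTheta (T - t) S σ S 0
      < deriv (fun s : ℝ => BSCall (T - s) S (Real.sqrt (σ ^ 2 + σe ^ 2 / (T - s))) S 0) t :=
  extendedBS_theta_ATM_strict_general σ σe t T S hσ hσe hS htT
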